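/- arXiv:2011.09998 — 8 statements merged into one kernel-verified Lean document; each statement's English description precedes it below -/
import Mathlib

section
/- With the MNL revenue setup, let $S^*$ be the unique optimal assortment of size at most $K$ with optimal revenue $\theta^*$, and let $u_i = v_i(r_i - \theta^*)$. Then $S^*$ equals the set of items $i \in [N]$ such that $u_i > 0$ and $u_i$ is among the top $K$ values of $\{u_j\}_{j \in [N]}$; equivalently, $S^* = \arg\max_{|S| \le K} \sum_{i \in S} u_i$. -/
/-!
Writing `θ` for the optimal revenue, the identity
`∑ i ∈ S, v i * (r i - θ) - θ = (R S - θ) * (1 + ∑ i ∈ S, v i)` shows that, since the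
denominator is positive, `S` beats `θ` in score exactly when it beats `θ` in revenue. Hence the
unique revenue maximiser is also the unique maximiser of the additive score `∑ i ∈ S, u i`.
A unique maximiser of an additive score under a cardinality bound is rigid under exchanges: every
chosen item strictly beats every unchosen one, every chosen item has positive score, and if the
bound is slack every unchosen item has nonpositive score. These facts pin it down as the set of
positive items among the top `K`.
-/

open Finset

section UniqueMaxSum

variable {ι α : Type*} [AddCommMonoid α] [LinearOrder α]

def IsUniqueMaxSum (u : ι → α) (K : ℕ) (T : Finset ι) : Prop :=
  #T ≤ K ∧ ∀ S : Finset ι, #S ≤ K → S ≠ T → ∑ i ∈ S, u i < ∑ i ∈ T, u i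

namespace IsUniqueMaxSum

variable {u : ι → α} {K : ℕ} {T : Finset ι}

theorem sum_le (hT : IsUniqueMaxSum u K T) {S : Finset ι} (hS : #S ≤ K) :
    ∑ i ∈ S, u i ≤ ∑ i ∈ T, u i := by
  rcases eq_or_ne S T with rfl | hne
  · exact le_rfl
  · exact (hT.2 S hS hne).le

variable [DecidableEq ι] [IsOrderedCancelAddMonoid α]

theorem lt_of_mem_of_notMem (hT : IsUniqueMaxSum u K T) {i j : ι} (hi : i ∈ T) (hj : j ∉ T) :
    u j < u i := by
  have hj' : j ∉ T.erase i := fun h => hj (mem_of_mem_erase h)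
  have hcard : #(insert j (T.erase i)) ≤ K := by
    rw [card_insert_of_notMem hj', card_erase_add_one hi]
    exact hT.1
  have hne : insert j (T.erase i) ≠ T := fun h => hj (h ▸ mem_insert_self j _)
  have hlt := hT.2 _ hcard hne
  rw [sum_insert hj', ← sum_erase_add T u hi, add_comm (u j)] at hlt
  exact lt_of_add_lt_add_left hlt

theorem pos_of_mem (hT : IsUniqueMaxSum u K T) {i : ι} (hi : i ∈ T) : 0 < u i := by
  have hcard : #(T.erase i) ≤ K := card_erase_le.trans hT.1
  have hne : T.erase i ≠ T := fun h => notMem_erase i T (h.symm ▸ hi)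
  have hlt := hT.2 _ hcard hne
  rwa [← sum_erase_add T u hi, lt_add_iff_pos_right] at hlt

theorem nonpos_of_notMem_of_card_lt (hT : IsUniqueMaxSum u K T) (hK : #T < K) {i : ι}
    (hi : i ∉ T) : u i ≤ 0 := by
  have hle := hT.sum_le (S := insert i T) (by rw [card_insert_of_notMem hi]; exact hK)
  rwa [sum_insert hi, add_le_iff_nonpos_left] at hle

variable [Fintype ι]

theorem card_filter_gt_lt_of_mem (hT : IsUniqueMaxSum u K T) {i : ι} (hi : i ∈ T) :
    #{j | u i < u j} < K := by
  have hsub : ({j | u i < u j} : Finset ι) ⊆ T.erase i := by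
    intro j hj
    rw [mem_filter] at hj
    refine mem_erase.2 ⟨fun h => (lt_irrefl (u i)) (h ▸ hj.2), ?_⟩
    by_contra hjT
    exact (hT.lt_of_mem_of_notMem hi hjT).not_gt hj.2
  exact ((card_le_card hsub).trans_lt (card_erase_lt_of_mem hi)).trans_le hT.1

theorem mem_of_pos_of_card_filter_gt_lt (hT : IsUniqueMaxSum u K T) {i : ι} (hpos : 0 < u i)
    (hcard : #{j | u i < u j} < K) : i ∈ T := by
  by_contra hi
  rcases hT.1.lt_or_eq with hlt | heq
  · exact (hT.nonpos_of_notMem_of_card_lt hlt hi).not_gt hpos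
  · obtain ⟨m, hmT, hm⟩ := not_subset.1 fun hsub => (card_le_card hsub).not_gt (heq ▸ hcard)
    have hmi : u m ≤ u i := not_lt.1 fun h => hm (mem_filter.2 ⟨mem_univ m, h⟩)
    exact (hT.lt_of_mem_of_notMem hmT hi).not_ge hmi

theorem eq_filter (hT : IsUniqueMaxSum u K T) :
    T = ({i | 0 < u i ∧ #{j | u i < u j} < K} : Finset ι) := by
  ext i
  simp only [mem_filter, mem_univ, true_and]
  exact ⟨fun hi => ⟨hT.pos_of_mem hi, hT.card_filter_gt_lt_of_mem hi⟩,
    fun ⟨hpos, hcard⟩ => hT.mem_of_pos_of_card_filter_gt_lt hpos hcard⟩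

end IsUniqueMaxSum

end UniqueMaxSum

section MNL

variable {ι : Type*}

/-- Multinomial-logit revenue; the no-purchase option has attraction weight `1`. -/
noncomputable def mnlRevenue (v r : ι → ℝ) (S : Finset ι) : ℝ :=
  (∑ i ∈ S, v i * r i) / (1 + ∑ i ∈ S, v i)

variable {v : ι → ℝ} (r : ι → ℝ)

theorem one_add_sum_pos (hv : ∀ i, 0 ≤ v i) (S : Finset ι) : 0 < 1 + ∑ i ∈ S, v i := by
  have := sum_nonneg fun i (_ : i ∈ S) => hv i
  linarith

theorem sum_advantage_sub_eq (θ : ℝ) {S : Finset ι} (hS : 1 + ∑ i ∈ S, v i ≠ 0) :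
    ∑ i ∈ S, v i * (r i - θ) - θ = (mnlRevenue v r S - θ) * (1 + ∑ i ∈ S, v i) := by
  rw [mnlRevenue, sub_mul, div_mul_cancel₀ _ hS]
  simp only [mul_sub, sum_sub_distrib, ← sum_mul]
  ring

theorem sum_advantage_revenue {S : Finset ι} (hS : 1 + ∑ i ∈ S, v i ≠ 0) :
    ∑ i ∈ S, v i * (r i - mnlRevenue v r S) = mnlRevenue v r S := by
  have := sum_advantage_sub_eq r (mnlRevenue v r S) hS
  rwa [sub_self, zero_mul, sub_eq_zero] at this

theorem sum_advantage_lt_of_revenue_lt (hv : ∀ i, 0 ≤ v i) {θ : ℝ} {S : Finset ι}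
    (hS : mnlRevenue v r S < θ) : ∑ i ∈ S, v i * (r i - θ) < θ := by
  have := sum_advantage_sub_eq r θ (one_add_sum_pos hv S).ne'
  have := mul_neg_of_neg_of_pos (sub_neg.2 hS) (one_add_sum_pos hv S)
  linarith

theorem isUniqueMaxSum_advantage [DecidableEq ι] (hv : ∀ i, 0 ≤ v i) {K : ℕ} {T : Finset ι}
    (hT : #T ≤ K)
    (hopt : ∀ S : Finset ι, #S ≤ K → S ≠ T → mnlRevenue v r S < mnlRevenue v r T) :
    IsUniqueMaxSum (fun i => v i * (r i - mnlRevenue v r T)) K T := by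
  refine ⟨hT, fun S hS hne => ?_⟩
  rw [sum_advantage_revenue r (one_add_sum_pos hv T).ne']
  exact sum_advantage_lt_of_revenue_lt r hv (hopt S hS hne)

end MNL

theorem mnl_optimal_assortment_eq_positive_topK_general
    (N K : ℕ)
    (v r : Fin N → ℝ)
    (hv : ∀ i, v i ∈ Set.Icc (0 : ℝ) 1)
    (R : Finset (Fin N) → ℝ)
    (hR : ∀ S : Finset (Fin N), R S = (∑ i ∈ S, v i * r i) / (1 + ∑ i ∈ S, v i))
    (Sstar : Finset (Fin N)) (hScard : Sstar.card ≤ K)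
    (hopt : ∀ S : Finset (Fin N), S.card ≤ K → R S ≤ R Sstar)
    (huniq : ∀ S : Finset (Fin N), S.card ≤ K → R S = R Sstar → S = Sstar)
    (θ : ℝ) (hθ : θ = R Sstar)
    (u : Fin N → ℝ) (hu : ∀ i, u i = v i * (r i - θ)) :
    Sstar = univ.filter (fun i : Fin N =>
        0 < u i ∧ (univ.filter (fun j : Fin N => u i < u j)).card < K) ∧
    (∀ S : Finset (Fin N), S.card ≤ K → ∑ i ∈ S, u i ≤ ∑ i ∈ Sstar, u i) := by
  subst hθ
  obtain rfl : R = mnlRevenue v r := funext hR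
  have hT : IsUniqueMaxSum u K Sstar := by
    rw [show u = _ from funext hu]
    exact isUniqueMaxSum_advantage r (fun i => (hv i).1) hScard
      fun S hS hne => (hopt S hS).lt_of_ne fun h => hne (huniq S hS h)
  exact ⟨hT.eq_filter, fun S hS => hT.sum_le hS⟩

/-- With the MNL revenue setup and the unique optimal assortment `Sstar`
of size at most `K`, the advantage scores `u i = v i * (r i - θ)` characterize `Sstar`:
it is exactly the set of items with positive scores among the top `K` scores, and
equivalently `Sstar` maximizes `∑ i ∈ S, u i` over assortments of size at most `K`. -/
theorem mnl_optimal_assortment_eq_positive_topK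
    (N K : ℕ) (hN : 0 < N) (hK : 0 < K)
    (v r : Fin N → ℝ)
    (hv : ∀ i, v i ∈ Set.Icc (0 : ℝ) 1) (hr : ∀ i, r i ∈ Set.Icc (0 : ℝ) 1)
    (R : Finset (Fin N) → ℝ)
    (hR : ∀ S : Finset (Fin N), R S = (∑ i ∈ S, v i * r i) / (1 + ∑ i ∈ S, v i))
    (Sstar : Finset (Fin N)) (hScard : Sstar.card ≤ K)
    (hopt : ∀ S : Finset (Fin N), S.card ≤ K → R S ≤ R Sstar)
    (huniq : ∀ S : Finset (Fin N), S.card ≤ K → R S = R Sstar → S = Sstar)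
    (θ : ℝ) (hθ : θ = R Sstar)
    (u : Fin N → ℝ) (hu : ∀ i, u i = v i * (r i - θ)) :
    Sstar = univ.filter (fun i : Fin N =>
        0 < u i ∧ (univ.filter (fun j : Fin N => u i < u j)).card < K) ∧
    (∀ S : Finset (Fin N), S.card ≤ K → ∑ i ∈ S, u i ≤ ∑ i ∈ Sstar, u i) :=
  mnl_optimal_assortment_eq_positive_topK_general N K v r hv R hR Sstar hScard hopt huniq θ hθ u hu
end

section
/- Revenue Comparison Lemma: For any assortment $S \subseteq [N]$, one has $(1 + \sum_{i \in S} v_i)(\theta^* - R(S)) = \sum_{i \in S^* \setminus S} u_i - \sum_{i \in S \setminus S^*} u_i$, where $u_i = v_i(r_i - \theta^*)$ and $\theta^* = \sum_{i \in S^*} u_i$. -/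
open Finset

theorem mul_sub_sum_mul_div_one_add_sum {ι K : Type*} [Field K] (s : Finset ι) (v r : ι → K)
    (θ : K) (h : 1 + ∑ i ∈ s, v i ≠ 0) :
    (1 + ∑ i ∈ s, v i) * (θ - (∑ i ∈ s, v i * r i) / (1 + ∑ i ∈ s, v i)) =
      θ - ∑ i ∈ s, v i * (r i - θ) := by
  rw [mul_sub, mul_div_cancel₀ _ h]
  simp only [mul_sub, sum_sub_distrib, ← sum_mul]
  ring

theorem mnl_revenue_comparison_general
    (N : ℕ) (v r : Fin N → ℝ)
    (hv : ∀ i, v i ∈ Set.Icc (0 : ℝ) 1)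
    (R : Finset (Fin N) → ℝ)
    (hR : ∀ S : Finset (Fin N), R S = (∑ i ∈ S, v i * r i) / (1 + ∑ i ∈ S, v i))
    (Sstar : Finset (Fin N)) (θ : ℝ)
    (u : Fin N → ℝ) (hu : ∀ i, u i = v i * (r i - θ))
    (hθu : θ = ∑ i ∈ Sstar, u i)
    (S : Finset (Fin N)) :
    (1 + ∑ i ∈ S, v i) * (θ - R S) = ∑ i ∈ Sstar \ S, u i - ∑ i ∈ S \ Sstar, u i := by
  have hden : 1 + ∑ i ∈ S, v i ≠ 0 :=
    (add_pos_of_pos_of_nonneg one_pos (sum_nonneg fun i _ => (hv i).1)).ne'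
  calc (1 + ∑ i ∈ S, v i) * (θ - R S) = θ - ∑ i ∈ S, v i * (r i - θ) := by
        rw [hR, mul_sub_sum_mul_div_one_add_sum S v r θ hden]
    _ = ∑ i ∈ Sstar, u i - ∑ i ∈ S, u i := by simp only [← hu, ← hθu]
    _ = ∑ i ∈ Sstar \ S, u i - ∑ i ∈ S \ Sstar, u i := sum_sdiff_sub_sum_sdiff.symm

/-- Revenue Comparison Lemma: For any assortment `S`,
`(1 + ∑ i ∈ S, v i) * (θ - R S) = ∑ i ∈ Sstar \ S, u i - ∑ i ∈ S \ Sstar, u i`,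
where `u i = v i * (r i - θ)` and `θ = R Sstar = ∑ i ∈ Sstar, u i`. -/
theorem mnl_revenue_comparison
    (N : ℕ) (v r : Fin N → ℝ)
    (hv : ∀ i, v i ∈ Set.Icc (0 : ℝ) 1) (hr : ∀ i, r i ∈ Set.Icc (0 : ℝ) 1)
    (R : Finset (Fin N) → ℝ)
    (hR : ∀ S : Finset (Fin N), R S = (∑ i ∈ S, v i * r i) / (1 + ∑ i ∈ S, v i))
    (Sstar : Finset (Fin N)) (θ : ℝ) (hθR : θ = R Sstar)
    (u : Fin N → ℝ) (hu : ∀ i, u i = v i * (r i - θ))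
    (hθu : θ = ∑ i ∈ Sstar, u i)
    (S : Finset (Fin N)) :
    (1 + ∑ i ∈ S, v i) * (θ - R S) = ∑ i ∈ Sstar \ S, u i - ∑ i ∈ S \ Sstar, u i :=
  mnl_revenue_comparison_general N v r hv R hR Sstar θ u hu hθu S
end

section
/- Suppose $i \in S^*$ and $j \notin S^*$, and let $\Delta_i = \theta^* - \max_{|S| \le K, i \notin S} R(S)$ be the suboptimality gap of item $i$. Then $\Delta_i \le u_i - u_j$ and $\Delta_i \le u_i$, where $u_\ell = v_\ell(r_\ell - \theta^*)$. -/
/-!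
Writing `B(S) = 1 + ∑_{k ∈ S} v k` and `u k = v k (r k - θ)`, one has the exact identity
`θ - R(S) = (θ - ∑_{k ∈ S} u k) / B(S)`. Applied to `S*` it gives `θ* = ∑_{k ∈ S*} u k`.
For any feasible `T` the left side is `≥ 0` by optimality, so (as `B(T) ≥ 1`) the gap is at most
`θ* - ∑_{k ∈ T} u k`. The sets `T = S* \ {i}` and `T = S* \ {i} ∪ {j}` avoid `i` and give
`u i` and `u i - u j`.
-/

open Finset

namespace MNL

variable {ι : Type*}

noncomputable def revenue (v r : ι → ℝ) (S : Finset ι) : ℝ :=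
  (∑ k ∈ S, v k * r k) / (1 + ∑ k ∈ S, v k)

variable {v r : ι → ℝ} {S : Finset ι} {θ : ℝ}

theorem sub_revenue_eq (hS : 1 + ∑ k ∈ S, v k ≠ 0) :
    θ - revenue v r S = (θ - ∑ k ∈ S, v k * (r k - θ)) / (1 + ∑ k ∈ S, v k) := by
  rw [revenue, eq_div_iff hS, sub_mul, div_mul_cancel₀ _ hS]
  simp only [mul_sub, sum_sub_distrib, ← sum_mul]
  ring

theorem one_le_one_add_sum (hv : ∀ k ∈ S, 0 ≤ v k) : 1 ≤ 1 + ∑ k ∈ S, v k :=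
  le_add_of_nonneg_right (sum_nonneg hv)

theorem sum_advantage_eq_of_eq_revenue (hv : ∀ k ∈ S, 0 ≤ v k) (hθ : θ = revenue v r S) :
    ∑ k ∈ S, v k * (r k - θ) = θ := by
  have hB := one_le_one_add_sum hv
  have h := sub_revenue_eq (r := r) (θ := θ) (by linarith : 1 + ∑ k ∈ S, v k ≠ 0)
  rw [← hθ, sub_self, eq_comm, div_eq_zero_iff] at h
  exact (sub_eq_zero.1 (h.resolve_right (by linarith))).symm

theorem sub_revenue_le_sub_sum_advantage (hv : ∀ k ∈ S, 0 ≤ v k) (hle : revenue v r S ≤ θ) :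
    θ - revenue v r S ≤ θ - ∑ k ∈ S, v k * (r k - θ) := by
  have hB := one_le_one_add_sum hv
  have hBpos : 0 < 1 + ∑ k ∈ S, v k := by linarith
  have hgap := sub_nonneg.2 hle
  rw [sub_revenue_eq hBpos.ne'] at hgap ⊢
  rw [le_div_iff₀ hBpos, zero_mul] at hgap
  exact div_le_self hgap hB

end MNL

open MNL in
theorem mnl_gap_le_advantage_diff_of_mem_general
    (N K : ℕ)
    (v r : Fin N → ℝ)
    (hv : ∀ i, v i ∈ Set.Icc (0 : ℝ) 1)
    (R : Finset (Fin N) → ℝ)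
    (hR : ∀ S : Finset (Fin N), R S = (∑ i ∈ S, v i * r i) / (1 + ∑ i ∈ S, v i))
    (Sstar : Finset (Fin N)) (hScard : Sstar.card ≤ K)
    (hopt : ∀ S : Finset (Fin N), S.card ≤ K → R S ≤ R Sstar)
    (θ : ℝ) (hθ : θ = R Sstar)
    (u : Fin N → ℝ) (hu : ∀ ℓ, u ℓ = v ℓ * (r ℓ - θ))
    (i j : Fin N) (hi : i ∈ Sstar) (hj : j ∉ Sstar)
    (hne : ((univ : Finset (Fin N)).powerset.filter
        (fun S => S.card ≤ K ∧ i ∉ S)).Nonempty)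
    (Δi : ℝ)
    (hΔ : Δi = θ - ((univ : Finset (Fin N)).powerset.filter
        (fun S => S.card ≤ K ∧ i ∉ S)).sup' hne R) :
    Δi ≤ u i - u j ∧ Δi ≤ u i := by
  obtain rfl : R = revenue v r := funext hR
  have hv0 : ∀ (T : Finset (Fin N)), ∀ k ∈ T, 0 ≤ v k := fun _ k _ => (hv k).1
  have hsum : ∑ k ∈ Sstar, u k = θ := by
    simp only [hu]; exact sum_advantage_eq_of_eq_revenue (hv0 _) hθ
  have gap_le (T : Finset (Fin N)) (hT : T.card ≤ K) (hiT : i ∉ T) :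
      Δi ≤ θ - ∑ k ∈ T, u k := by
    have hmem : T ∈ (univ.powerset.filter fun S => S.card ≤ K ∧ i ∉ S) :=
      mem_filter.2 ⟨mem_powerset.2 (subset_univ T), hT, hiT⟩
    simp only [hu]
    calc Δi ≤ θ - revenue v r T := hΔ ▸ sub_le_sub_left (le_sup' _ hmem) θ
      _ ≤ _ := sub_revenue_le_sub_sum_advantage (hv0 T) (hθ ▸ hopt T hT)
  have hjT : j ∉ Sstar.erase i := fun h => hj (mem_of_mem_erase h)
  have hcard : (Sstar.erase i).card + 1 = Sstar.card := card_erase_add_one hi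
  constructor
  · have h := gap_le (insert j (Sstar.erase i)) (by rw [card_insert_of_notMem hjT]; omega)
      (by simp [ne_of_mem_of_not_mem hi hj])
    rw [sum_insert hjT, sum_erase_eq_sub hi, hsum] at h
    linarith
  · have h := gap_le (Sstar.erase i) (by omega) (notMem_erase i Sstar)
    rwa [sum_erase_eq_sub hi, hsum, sub_sub_cancel] at h

/-- For `i ∈ Sstar` and `j ∉ Sstar`, the suboptimality gap
`Δᵢ = θ - max_{|S| ≤ K, i ∉ S} R S` satisfies `Δᵢ ≤ u i - u j` and `Δᵢ ≤ u i`,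
where `u ℓ = v ℓ * (r ℓ - θ)`. -/
theorem mnl_gap_le_advantage_diff_of_mem
    (N K : ℕ) (hK : 0 < K)
    (v r : Fin N → ℝ)
    (hv : ∀ i, v i ∈ Set.Icc (0 : ℝ) 1) (hr : ∀ i, r i ∈ Set.Icc (0 : ℝ) 1)
    (R : Finset (Fin N) → ℝ)
    (hR : ∀ S : Finset (Fin N), R S = (∑ i ∈ S, v i * r i) / (1 + ∑ i ∈ S, v i))
    (Sstar : Finset (Fin N)) (hScard : Sstar.card ≤ K)
    (hopt : ∀ S : Finset (Fin N), S.card ≤ K → R S ≤ R Sstar)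
    (θ : ℝ) (hθ : θ = R Sstar)
    (u : Fin N → ℝ) (hu : ∀ ℓ, u ℓ = v ℓ * (r ℓ - θ))
    (i j : Fin N) (hi : i ∈ Sstar) (hj : j ∉ Sstar)
    (hne : ((univ : Finset (Fin N)).powerset.filter
        (fun S => S.card ≤ K ∧ i ∉ S)).Nonempty)
    (Δi : ℝ)
    (hΔ : Δi = θ - ((univ : Finset (Fin N)).powerset.filter
        (fun S => S.card ≤ K ∧ i ∉ S)).sup' hne R) :
    Δi ≤ u i - u j ∧ Δi ≤ u i :=
  mnl_gap_le_advantage_diff_of_mem_general N K v r hv R hR Sstar hScard hopt θ hθ u hu i j hi hj hne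
    Δi hΔ
end

section
/- Error propagation for the reduced revenue: Suppose $|S| \le M$, $0 \le \zeta' \le \zeta \le 1$, $0 \le \nu'_i \le \nu_i \le 1$ for $i \in S$, $r_i \in [0,1]$, $\epsilon_1, \epsilon_3 \in (0,1]$, $\nu_i - \nu'_i \le (\max\{\nu_i, 1/M\})\epsilon_1$, and $\zeta - \zeta' \le \epsilon_3$. Then $R(S, \nu, \zeta) - R(S, \nu', \zeta') \le 2\epsilon_1 + \epsilon_3$, where $R(S, \nu, \zeta) = \frac{\zeta + \sum_{i\in S} \nu_i r_i}{1 + \sum_{i\in S} \nu_i}$. -/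
open Finset

/-! Writing `R = A / B` and `R' = A' / B'`, we have `A' ≥ 0` and `B' ≤ B`, so `R - R' ≤ (A - A') / B`.
The numerator splits as `(ζ - ζ') + ∑ (νᵢ - ν'ᵢ) rᵢ`; the first part is at most `ε₃` because `B ≥ 1`,
and since `rᵢ ≤ 1` and `max (νᵢ) (1/M) ≤ νᵢ + 1/M`, the second is at most `ε₁ (|S|/M + ∑ νᵢ) ≤ ε₁ B`. -/

theorem div_sub_div_le_sub_div {α : Type*} [Field α] [LinearOrder α] [IsStrictOrderedRing α]
    {a a' b b' : α} (ha' : 0 ≤ a') (hb' : 0 < b') (hbb' : b' ≤ b) :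
    a / b - a' / b' ≤ (a - a') / b := by
  rw [sub_div]
  gcongr

theorem sum_sub_le_mul_one_add_sum {ι : Type*} {S : Finset ι} {M : ℕ} (hS : S.card ≤ M)
    {ν ν' : ι → ℝ} {ε : ℝ} (hε : 0 ≤ ε) (hν : ∀ i ∈ S, 0 ≤ ν i)
    (hνd : ∀ i ∈ S, ν i - ν' i ≤ max (ν i) (1 / (M : ℝ)) * ε) :
    ∑ i ∈ S, (ν i - ν' i) ≤ ε * (1 + ∑ i ∈ S, ν i) := by
  have hcard : ∑ _i ∈ S, 1 / (M : ℝ) ≤ 1 := by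
    rw [sum_const, nsmul_eq_mul, mul_one_div]
    exact div_le_one_of_le₀ (by exact_mod_cast hS) M.cast_nonneg
  calc ∑ i ∈ S, (ν i - ν' i)
      ≤ ∑ i ∈ S, (ν i + 1 / (M : ℝ)) * ε := sum_le_sum fun i hi =>
        (hνd i hi).trans <| mul_le_mul_of_nonneg_right
          (max_le_add_of_nonneg (hν i hi) (by positivity)) hε
    _ = ε * (∑ _i ∈ S, 1 / (M : ℝ) + ∑ i ∈ S, ν i) := by
        rw [← sum_mul, sum_add_distrib, mul_comm, add_comm]
    _ ≤ ε * (1 + ∑ i ∈ S, ν i) := by gcongr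

theorem mnl_reduced_revenue_error_propagation_general
    {ι : Type*}
    (S : Finset ι) (M : ℕ) (hS : S.card ≤ M)
    (r ν ν' : ι → ℝ) (ζ ζ' : ℝ)
    (hr : ∀ i ∈ S, r i ∈ Set.Icc (0 : ℝ) 1)
    (hζ0 : 0 ≤ ζ') (hζζ : ζ' ≤ ζ)
    (hν : ∀ i ∈ S, 0 ≤ ν' i ∧ ν' i ≤ ν i ∧ ν i ≤ 1)
    (ε₁ ε₃ : ℝ) (hε₁ : ε₁ ∈ Set.Ioc (0 : ℝ) 1)
    (hνd : ∀ i ∈ S, ν i - ν' i ≤ max (ν i) (1 / (M : ℝ)) * ε₁)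
    (hζd : ζ - ζ' ≤ ε₃) :
    (ζ + ∑ i ∈ S, ν i * r i) / (1 + ∑ i ∈ S, ν i) -
      (ζ' + ∑ i ∈ S, ν' i * r i) / (1 + ∑ i ∈ S, ν' i) ≤ 2 * ε₁ + ε₃ := by
  have hν' : ∀ i ∈ S, 0 ≤ ν' i := fun i hi => (hν i hi).1
  have hνν' : ∀ i ∈ S, ν' i ≤ ν i := fun i hi => (hν i hi).2.1
  have hB' : 1 ≤ 1 + ∑ i ∈ S, ν' i := le_add_of_nonneg_right (sum_nonneg hν')
  have hBB' : 1 + ∑ i ∈ S, ν' i ≤ 1 + ∑ i ∈ S, ν i := by gcongr with i hi; exact hνν' i hi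
  have hB : 1 ≤ 1 + ∑ i ∈ S, ν i := hB'.trans hBB'
  have hA' : 0 ≤ ζ' + ∑ i ∈ S, ν' i * r i :=
    add_nonneg hζ0 (sum_nonneg fun i hi => mul_nonneg (hν' i hi) (hr i hi).1)
  have hweighted : ∑ i ∈ S, (ν i - ν' i) * r i ≤ ε₁ * (1 + ∑ i ∈ S, ν i) :=
    (sum_le_sum fun i hi => mul_le_of_le_one_right (sub_nonneg.2 (hνν' i hi)) (hr i hi).2).trans
      (sum_sub_le_mul_one_add_sum hS hε₁.1.le (fun i hi => (hν' i hi).trans (hνν' i hi)) hνd)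
  calc _ ≤ ((ζ + ∑ i ∈ S, ν i * r i) - (ζ' + ∑ i ∈ S, ν' i * r i)) / (1 + ∑ i ∈ S, ν i) :=
        div_sub_div_le_sub_div hA' (zero_lt_one.trans_le hB') hBB'
    _ = (ζ - ζ') / (1 + ∑ i ∈ S, ν i) + (∑ i ∈ S, (ν i - ν' i) * r i) / (1 + ∑ i ∈ S, ν i) := by
        simp only [sub_mul, sum_sub_distrib]
        ring
    _ ≤ ε₃ + ε₁ := add_le_add ((div_le_self (sub_nonneg.2 hζζ) hB).trans hζd)
        (div_le_of_le_mul₀ (by linarith) hε₁.1.le hweighted)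
    _ ≤ 2 * ε₁ + ε₃ := by linarith [hε₁.1]

/-- Error propagation for the reduced revenue function.
If `|S| ≤ M`, `0 ≤ ζ' ≤ ζ ≤ 1`, `0 ≤ ν'ᵢ ≤ νᵢ ≤ 1`, `rᵢ ∈ [0,1]`,
`νᵢ - ν'ᵢ ≤ max{νᵢ, 1/M}·ε₁` and `ζ - ζ' ≤ ε₃`, then
`R(S,ν,ζ) - R(S,ν',ζ') ≤ 2ε₁ + ε₃`. -/
theorem mnl_reduced_revenue_error_propagation
    {ι : Type*} [DecidableEq ι]
    (S : Finset ι) (M : ℕ) (hM : 1 ≤ M) (hS : S.card ≤ M)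
    (r ν ν' : ι → ℝ) (ζ ζ' : ℝ)
    (hr : ∀ i ∈ S, r i ∈ Set.Icc (0 : ℝ) 1)
    (hζ0 : 0 ≤ ζ') (hζζ : ζ' ≤ ζ) (hζ1 : ζ ≤ 1)
    (hν : ∀ i ∈ S, 0 ≤ ν' i ∧ ν' i ≤ ν i ∧ ν i ≤ 1)
    (ε₁ ε₃ : ℝ) (hε₁ : ε₁ ∈ Set.Ioc (0 : ℝ) 1) (hε₃ : ε₃ ∈ Set.Ioc (0 : ℝ) 1)
    (hνd : ∀ i ∈ S, ν i - ν' i ≤ max (ν i) (1 / (M : ℝ)) * ε₁)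
    (hζd : ζ - ζ' ≤ ε₃) :
    (ζ + ∑ i ∈ S, ν i * r i) / (1 + ∑ i ∈ S, ν i) -
      (ζ' + ∑ i ∈ S, ν' i * r i) / (1 + ∑ i ∈ S, ν' i) ≤ 2 * ε₁ + ε₃ :=
  mnl_reduced_revenue_error_propagation_general S M hS r ν ν' ζ ζ' hr hζ0 hζζ hν ε₁ ε₃ hε₁ hνd hζd
end

section
/- KL divergence bound for MNL choice distributions: Let $S \subseteq [N]$ be an assortment and let $v, v'$ be preference vectors with $v'_x \ge v_x > 0$ for some $x \in S$ and $v'_i = v_i$ for $i \ne x$. Let $P_S^v$ be the distribution on $S \cup \{0\}$ with $P_S^v(i) = v_i/(1 + \sum_{j\in S} v_j)$ (where $v_0 = 1$). Then $D_{KL}(P_S^v \,\|\, P_S^{v'}) \le \frac{(v'_x - v_x)^2}{2 v_x (1 + \sum_{i\in S} v_i)}$. -/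
/-!
Write `Z = 1 + ∑ v` and `Z' = 1 + ∑ v'`. Because the choice probabilities sum to one, the
divergence is `log (Z'/Z) + ∑ᵢ P(i) log (vᵢ/v'ᵢ)`, and when `v, v'` differ only at `x` the sum
reduces to `(v_x/Z) log (v_x/v'_x)`. With `δ = v'_x - v_x` we have `Z' = Z + δ`, so
`log (Z'/Z) ≤ δ/Z`, while `log (v'_x/v_x) ≥ t - t²/2` for `t = δ/v_x`. The first-order terms
cancel and `δ²/(2 v_x Z)` remains.
-/

open Finset Real

lemma Real.sub_sq_div_two_le_log_one_add {t : ℝ} (ht : 0 ≤ t) : t - t ^ 2 / 2 ≤ log (1 + t) := by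
  refine le_trans ?_ (le_log_one_add_of_nonneg ht)
  rw [le_div_iff₀ (by linarith)]
  nlinarith [pow_nonneg ht 3]

lemma Real.log_div_add_add_mul_log_div_le {a b Z : ℝ} (ha : 0 < a) (hab : a ≤ b) (hZ : 0 < Z) :
    log ((Z + (b - a)) / Z) + a / Z * log (a / b) ≤ (b - a) ^ 2 / (2 * a * Z) := by
  set δ := b - a
  have hδ : 0 ≤ δ := sub_nonneg.mpr hab
  have hnormalizer : log ((Z + δ) / Z) ≤ δ / Z := by
    rw [add_div, div_self hZ.ne']
    linarith [log_le_sub_one_of_pos (show 0 < 1 + δ / Z by positivity)]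
  have hratio : log (a / b) ≤ -(δ / a - (δ / a) ^ 2 / 2) := by
    have := sub_sq_div_two_le_log_one_add (div_nonneg hδ ha.le)
    rwa [one_add_div ha.ne', add_sub_cancel, ← neg_le_neg_iff, ← log_inv, inv_div] at this
  calc log ((Z + δ) / Z) + a / Z * log (a / b)
      ≤ δ / Z + a / Z * -(δ / a - (δ / a) ^ 2 / 2) := by gcongr
    _ = δ ^ 2 / (2 * a * Z) := by field_simp; ring

section MNL

variable {ι : Type*} {S : Finset ι} {v v' : ι → ℝ}

lemma mnl_kl_eq_log_normalizer_div_add (hv : ∀ i ∈ S, 0 < v i) (hv' : ∀ i ∈ S, 0 < v' i) :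
    (1 / (1 + ∑ j ∈ S, v j)) *
        log ((1 / (1 + ∑ j ∈ S, v j)) / (1 / (1 + ∑ j ∈ S, v' j))) +
      ∑ i ∈ S, (v i / (1 + ∑ j ∈ S, v j)) *
        log ((v i / (1 + ∑ j ∈ S, v j)) / (v' i / (1 + ∑ j ∈ S, v' j)))
    = log ((1 + ∑ j ∈ S, v' j) / (1 + ∑ j ∈ S, v j)) +
      ∑ i ∈ S, (v i / (1 + ∑ j ∈ S, v j)) * log (v i / v' i) := by
  set Z := 1 + ∑ j ∈ S, v j
  set Z' := 1 + ∑ j ∈ S, v' j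
  have hZ : 0 < Z := add_pos_of_pos_of_nonneg one_pos (sum_nonneg fun i hi => (hv i hi).le)
  have hZ' : 0 < Z' := add_pos_of_pos_of_nonneg one_pos (sum_nonneg fun i hi => (hv' i hi).le)
  have hterm : ∀ i ∈ S, v i / Z * log (v i / Z / (v' i / Z')) =
      v i / Z * log (Z' / Z) + v i / Z * log (v i / v' i) := by
    intro i hi
    have hvi := hv i hi
    have hv'i := hv' i hi
    rw [show v i / Z / (v' i / Z') = Z' / Z * (v i / v' i) by field_simp,
      log_mul (by positivity) (by positivity), mul_add]
  have hprob : 1 / Z + ∑ i ∈ S, v i / Z = 1 := by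
    rw [← sum_div, ← add_div, div_self hZ.ne']
  rw [div_div_div_eq, one_mul, mul_one, sum_congr rfl hterm, sum_add_distrib, ← sum_mul,
    ← add_assoc, ← add_mul, hprob, one_mul]

lemma sum_mul_log_div_eq_of_eq_off {x : ι} (hx : x ∈ S) (hagree : ∀ i, i ≠ x → v' i = v i)
    (c : ι → ℝ) : ∑ i ∈ S, c i * log (v i / v' i) = c x * log (v x / v' x) :=
  sum_eq_single_of_mem x hx fun i _ hi => by rw [hagree i hi, log_div_self, mul_zero]

lemma sum_eq_sum_add_sub_of_eq_off {x : ι} (hx : x ∈ S) (hagree : ∀ i, i ≠ x → v' i = v i) :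
    ∑ j ∈ S, v' j = ∑ j ∈ S, v j + (v' x - v x) := by
  rw [← sub_eq_iff_eq_add', ← sum_sub_distrib]
  exact sum_eq_single_of_mem x hx fun i _ hi => by rw [hagree i hi, sub_self]

end MNL

theorem mnl_kl_divergence_bound_general
    (N : ℕ) (S : Finset (Fin N)) (v v' : Fin N → ℝ)
    (hv : ∀ i ∈ S, 0 < v i)
    (x : Fin N) (hx : x ∈ S)
    (hvx : v x ≤ v' x)
    (hagree : ∀ i, i ≠ x → v' i = v i) :
    (1 / (1 + ∑ j ∈ S, v j)) *
        Real.log ((1 / (1 + ∑ j ∈ S, v j)) / (1 / (1 + ∑ j ∈ S, v' j))) +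
      ∑ i ∈ S, (v i / (1 + ∑ j ∈ S, v j)) *
        Real.log ((v i / (1 + ∑ j ∈ S, v j)) / (v' i / (1 + ∑ j ∈ S, v' j)))
    ≤ (v' x - v x) ^ 2 / (2 * v x * (1 + ∑ i ∈ S, v i)) := by
  have hv' : ∀ i ∈ S, 0 < v' i := fun i hi => by
    rcases eq_or_ne i x with rfl | hix
    · exact (hv i hi).trans_le hvx
    · exact hagree i hix ▸ hv i hi
  have hZ : 0 < 1 + ∑ j ∈ S, v j :=
    add_pos_of_pos_of_nonneg one_pos (sum_nonneg fun i hi => (hv i hi).le)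
  rw [mnl_kl_eq_log_normalizer_div_add hv hv', sum_mul_log_div_eq_of_eq_off hx hagree,
    sum_eq_sum_add_sub_of_eq_off hx hagree, ← add_assoc]
  exact log_div_add_add_mul_log_div_le (hv x hx) hvx hZ

/-- KL divergence bound for MNL choice distributions. For an assortment
`S` and preference vectors `v, v'` differing only at `x ∈ S` with `v' x ≥ v x > 0`,
the KL divergence between the induced choice distributions on `S ∪ {0}` (with no-purchase
weight `v₀ = 1`) is at most `(v' x - v x)² / (2 v x (1 + ∑_{i∈S} v i))`. Here the KL
divergence is written out explicitly as the no-purchase term plus the sum over `S`. -/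
theorem mnl_kl_divergence_bound
    (N : ℕ) (S : Finset (Fin N)) (v v' : Fin N → ℝ)
    (hv : ∀ i ∈ S, 0 < v i) (hv' : ∀ i ∈ S, 0 < v' i)
    (x : Fin N) (hx : x ∈ S)
    (hvx : v x ≤ v' x)
    (hagree : ∀ i, i ≠ x → v' i = v i) :
    (1 / (1 + ∑ j ∈ S, v j)) *
        Real.log ((1 / (1 + ∑ j ∈ S, v j)) / (1 / (1 + ∑ j ∈ S, v' j))) +
      ∑ i ∈ S, (v i / (1 + ∑ j ∈ S, v j)) *
        Real.log ((v i / (1 + ∑ j ∈ S, v j)) / (v' i / (1 + ∑ j ∈ S, v' j)))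
    ≤ (v' x - v x) ^ 2 / (2 * v x * (1 + ∑ i ∈ S, v i)) :=
  mnl_kl_divergence_bound_general N S v v' hv x hx hvx hagree
end

section
/- In the lower-bound instance (all rewards $r_i = 1$, $v_i$ as constructed with $\sum_{i=1}^K v_i = 1$, $v_i = \frac{1}{2K} - \frac{4\Delta_i}{1+2\Delta_i}$ for $i > K$, $\Delta_i \le \frac{1}{16K}$): for any assortment $S \subseteq [N]$ with $|S| \le K$, letting $B = S \setminus S^*$, one has $\theta^* - R(S) \ge \sum_{i\in B} \Delta_i / 2$, where $\theta^* = 1/2$. -/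
open Finset

/-!
Let `c = 1/(2K)`. Every item of `S*` has weight at least `c`, while an item `i ∉ S*` has weight
at most `c - 2Δᵢ`. Since `|S| ≤ min N K = |S*|`, the items of `B = S \ S*` can be matched with
distinct items of `S* \ S`, each swap losing at least `2Δᵢ` of weight; hence `∑_{i∈S} vᵢ ≤ 1 - 2δ`
with `δ = ∑_{i∈B} Δᵢ`, and the MNL revenue `T/(1+T)` of an assortment of total weight
`T ≤ 1 - 2δ` is at most `1/2 - δ/2`.
-/

lemma two_mul_le_four_mul_div_one_add_two_mul {x : ℝ} (hx₀ : 0 ≤ x) (hx : x ≤ 1 / 2) :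
    2 * x ≤ 4 * x / (1 + 2 * x) := by
  rw [le_div_iff₀ (by linarith)]
  nlinarith

lemma four_mul_div_one_add_two_mul_le {x : ℝ} (hx₀ : 0 ≤ x) :
    4 * x / (1 + 2 * x) ≤ 4 * x := by
  rw [div_le_iff₀ (by linarith)]
  nlinarith

lemma div_one_add_le_half_sub_half {T δ : ℝ} (hT₀ : 0 ≤ T) (hT : T ≤ 1 - 2 * δ) :
    T / (1 + T) ≤ 1 / 2 - δ / 2 := by
  rw [div_le_iff₀ (by linarith)]
  nlinarith [sq_nonneg δ, sq_nonneg (T - 1 + 2 * δ)]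

lemma Fin.card_le_card_filter_val_lt {N K : ℕ} (S : Finset (Fin N)) (hS : #S ≤ K) :
    #S ≤ #{i : Fin N | (i : ℕ) < K} := by
  rw [Fin.card_filter_val_lt]
  exact le_min (card_le_univ S |>.trans_eq (Fintype.card_fin N)) hS

lemma sum_le_one_sub_two_mul_sum_sdiff {α : Type*} [DecidableEq α] {s t : Finset α}
    {v Δ : α → ℝ} {c : ℝ} (hc : 0 ≤ c) (hcard : #s ≤ #t) (ht : ∑ i ∈ t, v i = 1)
    (hvt : ∀ i ∈ t, c ≤ v i) (hvs : ∀ i ∈ s \ t, v i ≤ c - 2 * Δ i) :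
    ∑ i ∈ s, v i ≤ 1 - 2 * ∑ i ∈ s \ t, Δ i := by
  have hout : ∑ i ∈ s \ t, v i ≤ #(s \ t) * c - 2 * ∑ i ∈ s \ t, Δ i := by
    calc ∑ i ∈ s \ t, v i ≤ ∑ i ∈ s \ t, (c - 2 * Δ i) := sum_le_sum hvs
      _ = #(s \ t) * c - 2 * ∑ i ∈ s \ t, Δ i := by
        rw [sum_sub_distrib, sum_const, nsmul_eq_mul, mul_sum]
  have hmissing : #(t \ s) * c ≤ ∑ i ∈ t \ s, v i := by
    simpa using card_nsmul_le_sum (t \ s) v c fun i hi => hvt i (mem_sdiff.1 hi).1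
  have hswap : (#(s \ t) : ℝ) * c ≤ #(t \ s) * c :=
    mul_le_mul_of_nonneg_right (mod_cast card_sdiff_le_card_sdiff_iff.2 hcard) hc
  have hin : ∑ i ∈ t ∩ s, v i + ∑ i ∈ t \ s, v i = 1 := by
    rw [sum_inter_add_sum_sdiff, ht]
  have hsplit : ∑ i ∈ s, v i = ∑ i ∈ t ∩ s, v i + ∑ i ∈ s \ t, v i := by
    rw [inter_comm, sum_inter_add_sum_sdiff]
  linarith

/-- In the lower-bound instance (all rewards `1`, `Sstar = {1,…,K}` with
total weight `1` so `θ* = 1/2`, items outside `Sstar` have `v i = 1/(2K) - 4Δᵢ/(1+2Δᵢ)`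
with `0 < Δᵢ ≤ 1/(16K)`, and items in `Sstar` have `v i ≥ 1/(2K)`), any assortment `S`
with `|S| ≤ K` satisfies `θ* - R S ≥ ∑_{i ∈ S \ Sstar} Δᵢ / 2`. -/
theorem mnl_lower_bound_instance_regret_per_round
    (N K : ℕ) (hK : 1 ≤ K)
    (Δ v : Fin N → ℝ)
    (Sstar : Finset (Fin N))
    (hS : Sstar = univ.filter (fun i : Fin N => (i : ℕ) + 1 ≤ K))
    (hsum : ∑ i ∈ Sstar, v i = 1)
    (hvS : ∀ i ∈ Sstar, 1 / (2 * (K : ℝ)) ≤ v i)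
    (hvB : ∀ i ∉ Sstar, v i = 1 / (2 * (K : ℝ)) - 4 * Δ i / (1 + 2 * Δ i))
    (hΔ : ∀ i ∉ Sstar, 0 < Δ i ∧ Δ i ≤ 1 / (16 * (K : ℝ)))
    (R : Finset (Fin N) → ℝ)
    (hR : ∀ S : Finset (Fin N), R S = (∑ i ∈ S, v i) / (1 + ∑ i ∈ S, v i))
    (S : Finset (Fin N)) (hcard : S.card ≤ K) :
    ∑ i ∈ S \ Sstar, Δ i / 2 ≤ 1 / 2 - R S := by
  set c : ℝ := 1 / (2 * (K : ℝ))
  have hc : 0 ≤ c := by positivity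
  have hΔc : ∀ i ∉ Sstar, 0 < Δ i ∧ Δ i ≤ c / 8 ∧ Δ i ≤ 1 / 2 := by
    intro i hi
    obtain ⟨hpos, hle⟩ := hΔ i hi
    have hK' : (1 : ℝ) ≤ K := by exact_mod_cast hK
    refine ⟨hpos, by convert hle using 1; ring, hle.trans ?_⟩
    rw [div_le_div_iff₀ (by positivity) two_pos]
    linarith
  have hv_nonneg : ∀ i, 0 ≤ v i := by
    intro i
    by_cases hi : i ∈ Sstar
    · exact hc.trans (hvS i hi)
    · obtain ⟨hpos, hle, -⟩ := hΔc i hi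
      rw [hvB i hi]
      linarith [four_mul_div_one_add_two_mul_le hpos.le]
  have hweight : ∑ i ∈ S, v i ≤ 1 - 2 * ∑ i ∈ S \ Sstar, Δ i := by
    refine sum_le_one_sub_two_mul_sum_sdiff hc ?_ hsum hvS fun i hi => ?_
    · simpa only [hS, Nat.add_one_le_iff] using Fin.card_le_card_filter_val_lt S hcard
    · obtain ⟨hpos, -, hhalf⟩ := hΔc i (mem_sdiff.1 hi).2
      rw [hvB i (mem_sdiff.1 hi).2]
      linarith [two_mul_le_four_mul_div_one_add_two_mul hpos.le hhalf]
  rw [hR, ← sum_div]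
  linarith [div_one_add_le_half_sub_half (sum_nonneg fun i _ => hv_nonneg i) hweight]
end

section
/- Upper-tail bound for sums of shifted geometric random variables: Let $X_1,\dots,X_n$ be independent random variables with $\mathbb{P}(X_i = k) = p_i(1-p_i)^{k-1}$ for $k \ge 1$, $p_* = \min_i p_i > 0$, $X = \sum_i X_i$, $\mu = \mathbb{E}[X]$. Then for any $\lambda \ge 1$, $\mathbb{P}(X \ge \lambda\mu) \le \exp(-p_*\mu(\lambda - 1 - \ln\lambda))$. -/
/-!
Chernoff's method with `t = p⋆ (1 - 1/λ)`. Since `eᵗ ≤ 1/(1 - t)`, a shifted geometric variable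
with parameter `q > t` has `𝔼 e^{tX} = q eᵗ / (1 - (1 - q) eᵗ) ≤ q/(q - t)`, and Bernoulli's
inequality `(1 - t/p⋆)^{p⋆/q} ≤ 1 - t/q` gives `q/(q - t) ≤ (p⋆/(p⋆ - t))^{p⋆/q} = λ^{p⋆/q}`.
By independence the moment generating function of the sum is at most `λ^{p⋆ μ}`, so
`ℙ(X ≥ λμ) ≤ e^{-tλμ} λ^{p⋆ μ} = exp(-p⋆ μ (λ - 1 - log λ))`.
-/

open MeasureTheory ProbabilityTheory Real

lemma one_sub_mul_exp_le_one (t : ℝ) : (1 - t) * exp t ≤ 1 := by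
  calc (1 - t) * exp t ≤ exp (-t) * exp t := by gcongr; linarith [add_one_le_exp (-t)]
    _ = 1 := by rw [← exp_add, neg_add_cancel, exp_zero]

lemma one_sub_mul_exp_lt_one {q t : ℝ} (htq : t < q) : (1 - q) * exp t < 1 := by
  nlinarith [exp_pos t, one_sub_mul_exp_le_one t]

lemma div_sub_le_div_sub_rpow {a b t : ℝ} (ha : 0 < a) (hab : a ≤ b) (hta : t < a) :
    b / (b - t) ≤ (a / (a - t)) ^ (a / b) := by
  have hb : 0 < b := ha.trans_le hab
  have hbernoulli : ((a - t) / a) ^ (a / b) ≤ (b - t) / b := by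
    have hbase : (a - t) / a = 1 + -t / a := by field_simp; ring
    have hrhs : (b - t) / b = 1 + a / b * (-t / a) := by field_simp; ring
    rw [hbase, hrhs]
    exact rpow_one_add_le_one_add_mul_self (by rw [le_div_iff₀ ha]; linarith)
      (div_nonneg ha.le hb.le) ((div_le_one hb).2 hab)
  rw [← inv_div, ← inv_div (a - t), inv_rpow (div_nonneg (by linarith) ha.le)]
  exact inv_anti₀ (by have := sub_pos.2 hta; positivity) hbernoulli

lemma ENNReal.tsum_ofReal_mul_geometric {c r : ℝ} (hc : 0 ≤ c) (hr0 : 0 ≤ r) (hr1 : r < 1) :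
    ∑' k : ℕ, ENNReal.ofReal (c * r ^ k) = ENNReal.ofReal (c / (1 - r)) := by
  rw [← ENNReal.ofReal_tsum_of_nonneg (fun k => by positivity)
    ((summable_geometric_of_lt_one hr0 hr1).mul_left c), tsum_mul_left,
    tsum_geometric_of_lt_one hr0 hr1, div_eq_mul_inv]

lemma lintegral_comp_eq_tsum {Ω α : Type*} [MeasurableSpace Ω] [MeasurableSpace α] [Countable α]
    [MeasurableSingletonClass α] {μ : Measure Ω} {X : Ω → α} (hX : Measurable X)
    (f : α → ENNReal) : ∫⁻ ω, f (X ω) ∂μ = ∑' a, f a * μ {ω | X ω = a} := by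
  rw [← lintegral_map (measurable_of_countable f) hX, lintegral_countable']
  congr 1 with a
  rw [Measure.map_apply hX (measurableSet_singleton a)]
  rfl

def IsShiftedGeometric {Ω : Type*} [MeasurableSpace Ω] (X : Ω → ℕ) (q : ℝ) (μ : Measure Ω) :
    Prop :=
  ∀ k : ℕ, μ {ω | X ω = k + 1} = ENNReal.ofReal (q * (1 - q) ^ k)

namespace IsShiftedGeometric

variable {Ω : Type*} [MeasurableSpace Ω] {μ : Measure Ω} [IsProbabilityMeasure μ] {X : Ω → ℕ}
  {q : ℝ}

lemma measure_eq_zero (hX : Measurable X) (hq0 : 0 < q) (hq1 : q ≤ 1)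
    (h : IsShiftedGeometric X q μ) : μ {ω | X ω = 0} = 0 := by
  -- the atoms at `k + 1` already carry total mass `∑ q (1 - q)ᵏ = 1`
  have htotal := lintegral_comp_eq_tsum (μ := μ) hX (fun _ => 1)
  simp only [lintegral_const, measure_univ, one_mul] at htotal
  rw [tsum_eq_zero_add' ENNReal.summable] at htotal
  simp only [h _, ENNReal.tsum_ofReal_mul_geometric hq0.le (sub_nonneg.2 hq1) (by linarith),
    sub_sub_cancel, div_self hq0.ne', ENNReal.ofReal_one] at htotal
  simpa using htotal.symm

lemma lintegral_exp_mul (hX : Measurable X) (hq0 : 0 < q) (hq1 : q ≤ 1)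
    (h : IsShiftedGeometric X q μ) {t : ℝ} (ht : (1 - q) * exp t < 1) :
    ∫⁻ ω, ENNReal.ofReal (exp (t * X ω)) ∂μ =
      ENNReal.ofReal (q * exp t / (1 - (1 - q) * exp t)) := by
  have hterm (k : ℕ) : ENNReal.ofReal (exp (t * ↑(k + 1))) * μ {ω | X ω = k + 1} =
      ENNReal.ofReal (q * exp t * ((1 - q) * exp t) ^ k) := by
    rw [h k, ← ENNReal.ofReal_mul (exp_pos _).le, Nat.cast_succ, mul_add_one, exp_add,
      mul_comm t, exp_nat_mul, mul_pow]
    ring_nf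
  rw [lintegral_comp_eq_tsum hX (fun k : ℕ => ENNReal.ofReal (exp (t * k))),
    tsum_eq_zero_add' ENNReal.summable, h.measure_eq_zero hX hq0 hq1, mul_zero, zero_add]
  simp only [hterm]
  exact ENNReal.tsum_ofReal_mul_geometric (by positivity)
    (mul_nonneg (sub_nonneg.2 hq1) (exp_pos t).le) ht

lemma integrable_exp_mul (hX : Measurable X) (hq0 : 0 < q) (hq1 : q ≤ 1)
    (h : IsShiftedGeometric X q μ) {t : ℝ} (ht : (1 - q) * exp t < 1) :
    Integrable (fun ω => exp (t * X ω)) μ := by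
  refine ⟨by fun_prop, ?_⟩
  rw [hasFiniteIntegral_iff_ofReal (ae_of_all _ fun ω => (exp_pos _).le),
    h.lintegral_exp_mul hX hq0 hq1 ht]
  exact ENNReal.ofReal_lt_top

lemma mgf_eq (hX : Measurable X) (hq0 : 0 < q) (hq1 : q ≤ 1)
    (h : IsShiftedGeometric X q μ) {t : ℝ} (ht : (1 - q) * exp t < 1) :
    mgf (fun ω => (X ω : ℝ)) μ t = q * exp t / (1 - (1 - q) * exp t) := by
  rw [mgf, integral_eq_lintegral_of_nonneg_ae (ae_of_all _ fun ω => (exp_pos _).le)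
    (by fun_prop), h.lintegral_exp_mul hX hq0 hq1 ht,
    ENNReal.toReal_ofReal (div_nonneg (by positivity) (sub_nonneg.2 ht.le))]

lemma mgf_le (hX : Measurable X) (hq0 : 0 < q) (hq1 : q ≤ 1)
    (h : IsShiftedGeometric X q μ) {t : ℝ} (htq : t < q) :
    mgf (fun ω => (X ω : ℝ)) μ t ≤ q / (q - t) := by
  have hr := one_sub_mul_exp_lt_one htq
  rw [h.mgf_eq hX hq0 hq1 hr, div_le_div_iff₀ (by linarith) (by linarith)]
  nlinarith [mul_le_mul_of_nonneg_left (one_sub_mul_exp_le_one t) hq0.le]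

end IsShiftedGeometric

lemma measure_sum_ge_le_of_isShiftedGeometric {Ω ι : Type*} [MeasurableSpace Ω] {μ : Measure Ω}
    [IsProbabilityMeasure μ] [Fintype ι] {X : ι → Ω → ℕ} (hX : ∀ i, Measurable (X i))
    {p : ι → ℝ} (hp0 : ∀ i, 0 < p i) (hp1 : ∀ i, p i ≤ 1)
    (h : ∀ i, IsShiftedGeometric (X i) (p i) μ) (hind : iIndepFun X μ)
    {t : ℝ} (ht0 : 0 ≤ t) (htp : ∀ i, t < p i) (x : ℝ) :
    μ.real {ω | x ≤ ∑ i, (X i ω : ℝ)} ≤ exp (-t * x) * ∏ i, p i / (p i - t) := by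
  set Y : ι → Ω → ℝ := fun i ω => X i ω
  have hYm (i : ι) : Measurable (Y i) := by fun_prop
  have hYind : iIndepFun Y μ := hind.comp _ fun _ => measurable_from_nat
  have hint (i : ι) : Integrable (fun ω => exp (t * Y i ω)) μ :=
    (h i).integrable_exp_mul (hX i) (hp0 i) (hp1 i) (one_sub_mul_exp_lt_one (htp i))
  calc μ.real {ω | x ≤ ∑ i, (X i ω : ℝ)} = μ.real {ω | x ≤ (∑ i, Y i) ω} := by
        simp only [Finset.sum_apply, Y]
    _ ≤ exp (-t * x) * mgf (∑ i, Y i) μ t :=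
        measure_ge_le_exp_mul_mgf x ht0 (hYind.integrable_exp_mul_sum hYm fun i _ => hint i)
    _ = exp (-t * x) * ∏ i, mgf (Y i) μ t := by rw [hYind.mgf_sum hYm]
    _ ≤ exp (-t * x) * ∏ i, p i / (p i - t) := by
        gcongr with i
        · exact fun _ _ => mgf_nonneg
        · exact (h i).mgf_le (hX i) (hp0 i) (hp1 i) (htp i)

/-- Janson-type tail bound: Let `X 1, …, X n` be independent shifted
geometric random variables, `ℙ(X i = k) = p i * (1 - p i)^(k-1)` for `k ≥ 1`, with
`p* = min p i > 0` and `μexp = 𝔼[∑ X i] = ∑ 1/p i`. Then for every `λ ≥ 1`,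
`ℙ(∑ X i ≥ λ·μexp) ≤ exp(-p*·μexp·(λ - 1 - log λ))`. -/
theorem shifted_geometric_sum_upper_tail
    {Ω : Type*} [MeasurableSpace Ω] (μ : Measure Ω) [IsProbabilityMeasure μ]
    (n : ℕ) (X : Fin n → Ω → ℕ) (hmeas : ∀ i, Measurable (X i))
    (p : Fin n → ℝ) (hp : ∀ i, 0 < p i ∧ p i ≤ 1)
    (hdist : ∀ (i : Fin n) (k : ℕ),
      μ {ω | X i ω = k + 1} = ENNReal.ofReal (p i * (1 - p i) ^ k))
    (hind : iIndepFun X μ)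
    (pstar : ℝ) (hpstar : 0 < pstar) (hple : ∀ i, pstar ≤ p i)
    (m : ℝ) (hm : m = ∑ i, 1 / p i)
    (lam : ℝ) (hlam : 1 ≤ lam) :
    (μ {ω | lam * m ≤ ∑ i, (X i ω : ℝ)}).toReal ≤
      Real.exp (-(pstar * m * (lam - 1 - Real.log lam))) := by
  have hlam0 : 0 < lam := by linarith
  set t := pstar * (1 - 1 / lam) with ht
  have ht0 : 0 ≤ t := mul_nonneg hpstar.le (sub_nonneg.2 ((div_le_one hlam0).2 hlam))
  have htp : t < pstar := by rw [ht]; nlinarith [one_div_pos.2 hlam0]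
  have hpstar_div : pstar / (pstar - t) = lam := by rw [ht]; field_simp; ring
  have hprod : ∏ i, p i / (p i - t) ≤ lam ^ (pstar * m) :=
    calc ∏ i, p i / (p i - t) ≤ ∏ i, (pstar / (pstar - t)) ^ (pstar / p i) :=
          Finset.prod_le_prod (fun i _ => div_nonneg (hp i).1.le (by linarith [hple i]))
            fun i _ => div_sub_le_div_sub_rpow hpstar (hple i) htp
      _ = lam ^ (pstar * m) := by
          rw [hpstar_div, ← rpow_sum_of_pos hlam0, hm, Finset.mul_sum]
          simp only [mul_one_div]
  calc (μ {ω | lam * m ≤ ∑ i, (X i ω : ℝ)}).toReal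
      ≤ exp (-t * (lam * m)) * ∏ i, p i / (p i - t) :=
        measure_sum_ge_le_of_isShiftedGeometric hmeas (fun i => (hp i).1) (fun i => (hp i).2)
          hdist hind ht0 (fun i => htp.trans_le (hple i)) _
    _ ≤ exp (-t * (lam * m)) * lam ^ (pstar * m) := by gcongr
    _ = exp (-(pstar * m * (lam - 1 - log lam))) := by
        rw [rpow_def_of_pos hlam0, ← exp_add, ht]
        congr 1
        field_simp
        ring
end

section
/- Geometric random variable from epoch-based offering: In the MNL model with parameters $v_i \ge 0$ and $v_0 = 1$, suppose the assortment $S$ is offered repeatedly until the 'no purchase' outcome occurs, and $x_i$ counts the number of times item $i \in S$ is purchased during this epoch. Then $x_i$ is a geometric random variable with $\mathbb{P}(x_i = m) = \frac{1}{1+v_i}\left(\frac{v_i}{1+v_i}\right)^m$ for $m \ge 0$; in particular $\mathbb{E}[x_i] = v_i$. -/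
/-!
Split the event `x = m` according to the epoch length `τ = k + m` and the set `T` of the `m`
times at which `i` is bought. By independence each such pattern has probability `a^m q^k p`,
where `a`, `p`, `q` are the one-step probabilities of buying `i`, of no purchase, and of anything
else. Summing over the `(k+m).choose m` patterns and over `k` gives the negative binomial series
`a^m p / (1 - q)^(m+1)`, and since `1 - q = a + p` this is the geometric law with ratio
`a / (a + p) = v i / (1 + v i)`.
-/

open Finset MeasureTheory ProbabilityTheory

/-- Discrete σ-algebra on the countable outcome space `Option (Fin N)`. -/
instance optionFinMeasurableSpace (N : ℕ) : MeasurableSpace (Option (Fin N)) := ⊤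

open scoped ENNReal NNReal

theorem ENNReal.tsum_choose_add_mul_pow {q : ℝ≥0∞} (hq : q < 1) (m : ℕ) :
    ∑' k, ((k + m).choose m : ℝ≥0∞) * q ^ k = ((1 - q) ^ (m + 1))⁻¹ := by
  lift q to ℝ≥0 using ne_top_of_lt hq
  have hq1 : q < 1 := by exact_mod_cast hq
  have hsum : HasSum (fun k => ((k + m).choose m : ℝ≥0) * q ^ k) ((1 - q) ^ (m + 1))⁻¹ := by
    have hnorm : ‖(q : ℝ)‖ < 1 := by simpa using hq1
    rw [← NNReal.hasSum_coe]
    push_cast [NNReal.coe_sub hq1.le]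
    simpa using hasSum_choose_mul_geometric_of_norm_lt_one m hnorm
  have hpos : (1 - q) ^ (m + 1) ≠ 0 := pow_ne_zero _ (tsub_pos_of_lt hq1).ne'
  rw [← ENNReal.coe_one, ← ENNReal.coe_sub, ← ENNReal.coe_pow, ← ENNReal.coe_inv hpos,
    ← ENNReal.tsum_coe_eq hsum]
  push_cast
  rfl

section Epoch

variable {Ω α : Type*} {c : ℕ → Ω → α} {halt hit : Set α} {τ : Ω → ℕ}

/-- The outcomes allowed at time `t` in an epoch that ends at time `n` and hits at exactly
the times in `T`. -/
def epochPattern (halt hit : Set α) (n : ℕ) (T : Finset ℕ) (t : ℕ) : Set α :=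
  if t = n then halt else if t ∈ T then hit else (halt ∪ hit)ᶜ

theorem setOf_epoch_eq_biInter [DecidablePred (· ∈ hit)] (hdisj : Disjoint hit halt)
    (hτ : ∀ ω, c (τ ω) ω ∈ halt ∧ ∀ t < τ ω, c t ω ∉ halt) {n : ℕ} {T : Finset ℕ}
    (hT : T ⊆ range n) :
    {ω | τ ω = n ∧ {t ∈ range (τ ω) | c t ω ∈ hit} = T} =
      ⋂ t ∈ range (n + 1), c t ⁻¹' epochPattern halt hit n T t := by
  ext ω
  simp only [Set.mem_ofPred_eq, Set.mem_iInter, mem_range, Set.mem_preimage, epochPattern]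
  constructor
  · rintro ⟨rfl, rfl⟩ t ht
    rcases (Nat.lt_succ_iff_lt_or_eq.mp ht) with ht | rfl
    · by_cases hhit : c t ω ∈ hit
      · simp [ht.ne, ht, hhit]
      · simp [ht.ne, ht, hhit, (hτ ω).2 t ht]
    · simpa using (hτ ω).1
  · intro h
    have hhalt : c n ω ∈ halt := by simpa using h n n.lt_succ_self
    have hpat : ∀ t < n, c t ω ∈ (if t ∈ T then hit else (halt ∪ hit)ᶜ) := fun t ht => by
      simpa [ht.ne] using h t (Nat.lt_succ_of_lt ht)
    have hne : ∀ t < n, c t ω ∉ halt := fun t ht hs => by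
      have := hpat t ht
      split_ifs at this
      · exact hdisj.notMem_of_mem_left this hs
      · exact this (Or.inl hs)
    have hτn : τ ω = n :=
      le_antisymm (not_lt.1 fun hlt => (hτ ω).2 n hlt hhalt)
        (not_lt.1 fun hlt => hne _ hlt (hτ ω).1)
    refine ⟨hτn, ?_⟩
    ext t
    rw [mem_filter, mem_range, hτn]
    constructor
    · rintro ⟨ht, hhit⟩
      by_contra htT
      simpa [htT, hhit] using hpat t ht
    · intro htT
      have ht := mem_range.1 (hT htT)
      exact ⟨ht, by simpa [htT] using hpat t ht⟩

theorem setOf_epoch_card_eq_biUnion [DecidablePred (· ∈ hit)] (n m : ℕ) :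
    {ω | τ ω = n ∧ #{t ∈ range (τ ω) | c t ω ∈ hit} = m} =
      ⋃ T ∈ powersetCard m (range n),
        {ω | τ ω = n ∧ {t ∈ range (τ ω) | c t ω ∈ hit} = T} := by
  ext ω
  simp only [Set.mem_ofPred_eq, Set.mem_iUnion, mem_powersetCard, exists_prop]
  constructor
  · rintro ⟨rfl, hm⟩
    exact ⟨_, ⟨filter_subset _ _, hm⟩, rfl, rfl⟩
  · rintro ⟨T, ⟨-, rfl⟩, rfl, rfl⟩
    exact ⟨rfl, rfl⟩

variable [MeasurableSpace Ω] [MeasurableSpace α] {μ : Measure Ω}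

theorem measurableSet_epochPattern (hhalt : MeasurableSet halt) (hhit : MeasurableSet hit)
    (n : ℕ) (T : Finset ℕ) (t : ℕ) : MeasurableSet (epochPattern halt hit n T t) := by
  unfold epochPattern
  split_ifs
  exacts [hhalt, hhit, (hhalt.union hhit).compl]

theorem measure_biInter_epochPattern (hind : iIndepFun c μ) (hhalt : MeasurableSet halt)
    (hhit : MeasurableSet hit) {p a q : ℝ≥0∞} (hp : ∀ t, μ (c t ⁻¹' halt) = p)
    (ha : ∀ t, μ (c t ⁻¹' hit) = a) (hq : ∀ t, μ (c t ⁻¹' (halt ∪ hit)ᶜ) = q)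
    {n : ℕ} {T : Finset ℕ} (hT : T ⊆ range n) :
    μ (⋂ t ∈ range (n + 1), c t ⁻¹' epochPattern halt hit n T t) =
      a ^ #T * q ^ (n - #T) * p := by
  have hbefore : ∀ t ∈ range n,
      μ (c t ⁻¹' epochPattern halt hit n T t) = if t ∈ T then a else q := by
    intro t ht
    simp only [epochPattern, (mem_range.1 ht).ne, if_false]
    split_ifs
    exacts [ha t, hq t]
  rw [hind.measure_inter_preimage_eq_mul _ fun t _ => measurableSet_epochPattern hhalt hhit n T t,
    prod_range_succ, prod_congr rfl hbefore, prod_ite, filter_mem_eq_inter, inter_eq_right.2 hT,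
    filter_not, filter_mem_eq_inter, inter_eq_right.2 hT, prod_const, prod_const,
    card_sdiff_of_subset hT, card_range]
  simp [epochPattern, hp]

theorem measurableSet_epoch [DecidablePred (· ∈ hit)] (hc : ∀ t, Measurable (c t))
    (hdisj : Disjoint hit halt) (hτ : ∀ ω, c (τ ω) ω ∈ halt ∧ ∀ t < τ ω, c t ω ∉ halt)
    (hhalt : MeasurableSet halt) (hhit : MeasurableSet hit) {n : ℕ} {T : Finset ℕ}
    (hT : T ⊆ range n) :
    MeasurableSet {ω | τ ω = n ∧ {t ∈ range (τ ω) | c t ω ∈ hit} = T} := by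
  rw [setOf_epoch_eq_biInter hdisj hτ hT]
  exact Finset.measurableSet_biInter _ fun t _ =>
    hc t (measurableSet_epochPattern hhalt hhit n T t)

theorem measure_epoch_length_count [DecidablePred (· ∈ hit)] (hc : ∀ t, Measurable (c t))
    (hind : iIndepFun c μ) (hdisj : Disjoint hit halt)
    (hτ : ∀ ω, c (τ ω) ω ∈ halt ∧ ∀ t < τ ω, c t ω ∉ halt)
    (hhalt : MeasurableSet halt) (hhit : MeasurableSet hit) {p a q : ℝ≥0∞}
    (hp : ∀ t, μ (c t ⁻¹' halt) = p) (ha : ∀ t, μ (c t ⁻¹' hit) = a)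
    (hq : ∀ t, μ (c t ⁻¹' (halt ∪ hit)ᶜ) = q) (n m : ℕ) :
    μ {ω | τ ω = n ∧ #{t ∈ range (τ ω) | c t ω ∈ hit} = m} =
      n.choose m * (a ^ m * q ^ (n - m) * p) := by
  have hdisjT : (powersetCard m (range n) : Set (Finset ℕ)).PairwiseDisjoint
      fun T => {ω | τ ω = n ∧ {t ∈ range (τ ω) | c t ω ∈ hit} = T} :=
    fun T _ T' _ hTT' => Set.disjoint_left.2 fun ω h h' => hTT' (h.2.symm.trans h'.2)
  rw [setOf_epoch_card_eq_biUnion, measure_biUnion_finset hdisjT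
    fun T hT => measurableSet_epoch hc hdisj hτ hhalt hhit (mem_powersetCard.1 hT).1]
  rw [sum_congr rfl fun T hT => by
    rw [setOf_epoch_eq_biInter hdisj hτ (mem_powersetCard.1 hT).1,
      measure_biInter_epochPattern hind hhalt hhit hp ha hq (mem_powersetCard.1 hT).1,
      (mem_powersetCard.1 hT).2]]
  rw [sum_const, card_powersetCard, card_range, nsmul_eq_mul]

theorem measure_epoch_count_eq_tsum [DecidablePred (· ∈ hit)] (hc : ∀ t, Measurable (c t))
    (hdisj : Disjoint hit halt) (hτ : ∀ ω, c (τ ω) ω ∈ halt ∧ ∀ t < τ ω, c t ω ∉ halt)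
    (hhalt : MeasurableSet halt) (hhit : MeasurableSet hit) (m : ℕ) :
    μ {ω | #{t ∈ range (τ ω) | c t ω ∈ hit} = m} =
      ∑' k, μ {ω | τ ω = k + m ∧ #{t ∈ range (τ ω) | c t ω ∈ hit} = m} := by
  have hcover : {ω | #{t ∈ range (τ ω) | c t ω ∈ hit} = m} =
      ⋃ k, {ω | τ ω = k + m ∧ #{t ∈ range (τ ω) | c t ω ∈ hit} = m} := by
    ext ω
    simp only [Set.mem_ofPred_eq, Set.mem_iUnion]
    constructor
    · intro hm
      have : m ≤ τ ω := hm ▸ (card_filter_le _ _).trans (card_range _).le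
      exact ⟨τ ω - m, by omega, hm⟩
    · rintro ⟨k, -, hm⟩
      exact hm
  have hdisjk : Pairwise (Function.onFun Disjoint
      fun k => {ω | τ ω = k + m ∧ #{t ∈ range (τ ω) | c t ω ∈ hit} = m}) :=
    fun k k' hkk' => Set.disjoint_left.2 fun ω h h' => hkk' (by have := h.1.symm.trans h'.1; omega)
  have hmeas : ∀ k, MeasurableSet {ω | τ ω = k + m ∧ #{t ∈ range (τ ω) | c t ω ∈ hit} = m} :=
    fun k => by
      rw [setOf_epoch_card_eq_biUnion]
      exact Finset.measurableSet_biUnion _ fun T hT =>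
        measurableSet_epoch hc hdisj hτ hhalt hhit (mem_powersetCard.1 hT).1
  rw [hcover, measure_iUnion hdisjk hmeas]

theorem measure_epoch_count_eq_geometric [IsProbabilityMeasure μ] [DecidablePred (· ∈ hit)]
    (hc : ∀ t, Measurable (c t)) (hind : iIndepFun c μ) (hdisj : Disjoint hit halt)
    (hτ : ∀ ω, c (τ ω) ω ∈ halt ∧ ∀ t < τ ω, c t ω ∉ halt)
    (hhalt : MeasurableSet halt) (hhit : MeasurableSet hit) {p a : ℝ≥0∞}
    (hp : ∀ t, μ (c t ⁻¹' halt) = p) (ha : ∀ t, μ (c t ⁻¹' hit) = a) (hp0 : p ≠ 0) (m : ℕ) :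
    μ {ω | #{t ∈ range (τ ω) | c t ω ∈ hit} = m} = p / (a + p) * (a / (a + p)) ^ m := by
  have hhalt_or_hit : ∀ t, μ (c t ⁻¹' (halt ∪ hit)) = a + p := fun t => by
    rw [Set.preimage_union, measure_union (hdisj.symm.preimage (c t)) (hc t hhit), hp, ha,
      add_comm]
  have hq : ∀ t, μ (c t ⁻¹' (halt ∪ hit)ᶜ) = 1 - (a + p) := fun t => by
    rw [Set.preimage_compl, prob_compl_eq_one_sub (hc t (hhalt.union hhit)), hhalt_or_hit]
  have hap : a + p ≤ 1 := hhalt_or_hit 0 ▸ prob_le_one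
  have hq1 : 1 - (a + p) < 1 :=
    ENNReal.sub_lt_self ENNReal.one_ne_top one_ne_zero (by simp [hp0])
  calc μ {ω | #{t ∈ range (τ ω) | c t ω ∈ hit} = m}
      = ∑' k, ((k + m).choose m : ℝ≥0∞) * (a ^ m * (1 - (a + p)) ^ k * p) := by
        simp only [measure_epoch_count_eq_tsum hc hdisj hτ hhalt hhit,
          measure_epoch_length_count hc hind hdisj hτ hhalt hhit hp ha hq, Nat.add_sub_cancel]
    _ = a ^ m * p * ∑' k, ((k + m).choose m : ℝ≥0∞) * (1 - (a + p)) ^ k := by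
        rw [← ENNReal.tsum_mul_left]
        congr 1 with k
        ring
    _ = p / (a + p) * (a / (a + p)) ^ m := by
        rw [ENNReal.tsum_choose_add_mul_pow hq1, ENNReal.sub_sub_cancel ENNReal.one_ne_top hap,
          ENNReal.inv_pow, div_eq_mul_inv, div_eq_mul_inv, mul_pow, pow_succ]
        ring

end Epoch

theorem mnl_epoch_purchase_count_geometric_general
    {Ω : Type*} [MeasurableSpace Ω] (μ : Measure Ω) [IsProbabilityMeasure μ]
    (N : ℕ) (v : Fin N → ℝ) (hv : ∀ i, 0 ≤ v i)
    (S : Finset (Fin N))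
    (c : ℕ → Ω → Option (Fin N)) (hmeas : ∀ t, Measurable (c t))
    (hdist : ∀ t : ℕ,
      (∀ j ∈ S, μ {ω | c t ω = some j} =
        ENNReal.ofReal (v j / (1 + ∑ l ∈ S, v l))) ∧
      μ {ω | c t ω = none} = ENNReal.ofReal (1 / (1 + ∑ l ∈ S, v l)))
    (hind : iIndepFun (m := fun _ => inferInstance) c μ)
    (τ : Ω → ℕ)
    (hτ : ∀ ω, c (τ ω) ω = none ∧ ∀ t < τ ω, c t ω ≠ none)
    (i : Fin N) (hi : i ∈ S)
    (x : Ω → ℕ)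
    (hx : ∀ ω, x ω =
      ((Finset.range (τ ω)).filter (fun t => c t ω = some i)).card) :
    ∀ m : ℕ, μ {ω | x ω = m} =
      ENNReal.ofReal ((1 / (1 + v i)) * (v i / (1 + v i)) ^ m) := by
  intro m
  set V := ∑ l ∈ S, v l
  have hV : 0 < 1 + V := by linarith [sum_nonneg fun l (_ : l ∈ S) => hv l]
  have hvi := hv i
  have hgeom := measure_epoch_count_eq_geometric (halt := {none}) (hit := {some i}) hmeas hind
    (by simp) hτ (MeasurableSet.singleton _) (MeasurableSet.singleton _)
    (fun t => (hdist t).2) (fun t => (hdist t).1 i hi) (by simpa using hV) m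
  rw [show x = fun ω => #{t ∈ range (τ ω) | c t ω ∈ ({some i} : Set _)} from funext hx, hgeom]
  have hsum : ENNReal.ofReal (v i / (1 + V)) + ENNReal.ofReal (1 / (1 + V)) =
      ENNReal.ofReal ((1 + v i) / (1 + V)) := by
    rw [← ENNReal.ofReal_add (by positivity) (by positivity), add_div, add_comm]
  rw [hsum, ← ENNReal.ofReal_div_of_pos (by positivity),
    ← ENNReal.ofReal_div_of_pos (by positivity), ← ENNReal.ofReal_pow (by positivity),
    ← ENNReal.ofReal_mul (by positivity)]
  congr 2
  · field_simp
  · field_simp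

/-- Geometric purchase count from epoch-based offering: In the MNL model
with weights `v i ≥ 0` (and no-purchase weight `1`), the assortment `S` is offered at
i.i.d. time steps `c 0, c 1, …` (outcome `some j` = item `j ∈ S` purchased, `none` =
no purchase), each with the MNL choice probabilities. The epoch ends at the first
no-purchase time `τ`, and `x` counts the purchases of a fixed item `i ∈ S` during the
epoch. Then `x` is geometric: `ℙ(x = m) = (1/(1+v i)) * (v i/(1+v i))^m` for all `m`
(so in particular `𝔼[x] = v i`). -/
theorem mnl_epoch_purchase_count_geometric
    {Ω : Type*} [MeasurableSpace Ω] (μ : Measure Ω) [IsProbabilityMeasure μ]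
    (N : ℕ) (v : Fin N → ℝ) (hv : ∀ i, 0 ≤ v i)
    (S : Finset (Fin N))
    (c : ℕ → Ω → Option (Fin N)) (hmeas : ∀ t, Measurable (c t))
    (hsupp : ∀ t ω j, c t ω = some j → j ∈ S)
    (hdist : ∀ t : ℕ,
      (∀ j ∈ S, μ {ω | c t ω = some j} =
        ENNReal.ofReal (v j / (1 + ∑ l ∈ S, v l))) ∧
      μ {ω | c t ω = none} = ENNReal.ofReal (1 / (1 + ∑ l ∈ S, v l)))
    (hind : iIndepFun (m := fun _ => inferInstance) c μ)
    (τ : Ω → ℕ)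
    (hτ : ∀ ω, c (τ ω) ω = none ∧ ∀ t < τ ω, c t ω ≠ none)
    (i : Fin N) (hi : i ∈ S)
    (x : Ω → ℕ)
    (hx : ∀ ω, x ω =
      ((Finset.range (τ ω)).filter (fun t => c t ω = some i)).card) :
    ∀ m : ℕ, μ {ω | x ω = m} =
      ENNReal.ofReal ((1 / (1 + v i)) * (v i / (1 + v i)) ^ m) :=
  mnl_epoch_purchase_count_geometric_general μ N v hv S c hmeas hdist hind τ hτ i hi x hx
end
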